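/- Let P be a rank-d separable orthogonal projector on ℂ^d ⊗ ℂ^d with P ≥ |Φ⟩⟨Φ|. Then there exists an orthonormal basis B of ℂ^d such that P = Σ_{ψ∈B}|ψ⟩⟨ψ|⊗|ψ*⟩⟨ψ*|. -/

import Mathlib

open Matrix
open scoped ComplexOrder

/-- The conjugate-basis test projector P(B) = Σ_{ψ∈B} |ψ⟩⟨ψ| ⊗ |ψ*⟩⟨ψ*| on ℂ^d ⊗ ℂ^d. -/
noncomputable def projCB (d : ℕ) (B : Fin d → Fin d → ℂ) :
    Matrix (Fin d × Fin d) (Fin d × Fin d) ℂ :=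
  ∑ i, Matrix.kroneckerMap (· * ·) (Matrix.vecMulVec (B i) (star (B i)))
      (Matrix.vecMulVec (star (B i)) (B i))

/-- The maximally entangled state |Φ⟩ = d^{-1/2} Σ_j |j⟩⊗|j⟩ as a vector on Fin d × Fin d. -/
noncomputable def PhiVec (d : ℕ) : Fin d × Fin d → ℂ :=
  fun p => if p.1 = p.2 then ((Real.sqrt d : ℝ) : ℂ)⁻¹ else 0

/-- The rank-one projector |Φ⟩⟨Φ|. -/
noncomputable def PhiMat (d : ℕ) : Matrix (Fin d × Fin d) (Fin d × Fin d) ℂ :=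
  Matrix.vecMulVec (PhiVec d) (star (PhiVec d))

/-- B is an orthonormal basis of ℂ^d. -/
def IsONB (d : ℕ) (B : Fin d → Fin d → ℂ) : Prop :=
  ∀ i j, star (B i) ⬝ᵥ B j = if i = j then 1 else 0


/-!
Since `P ≥ |Φ⟩⟨Φ|` and `P ≤ 1`, the projector fixes `Φ`. Writing `P = Σ c_j |w_j⟩⟨w_j|` with
`w_j = φ_j ⊗ χ_j`, the identity `⟨Φ, P Φ⟩ = 1` reads `Σ c_j |⟨φ_j*, χ_j⟩|² = d`, while
`tr P = rank P = d` gives `Σ c_j = d`; by Cauchy–Schwarz every `|⟨φ_j*, χ_j⟩| = 1`, so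
`χ_j ∝ φ_j*`. Now `P Φ = Φ` says `Σ c_j |φ_j⟩⟨φ_j| = 1`, hence `Σ_j c_j |⟨φ_j, φ_k⟩|² = 1` for
every `k`, and comparing `tr P = Σ c_j` with `tr P² = Σ c_j c_k |⟨φ_j, φ_k⟩|⁴` shows that every
`|⟨φ_j, φ_k⟩|` is `0` or `1`. So the distinct projectors `|φ_j⟩⟨φ_j|` are mutually orthogonal,
each carries total weight `1`, and they resolve the identity: they come from an orthonormal basis.
-/

theorem Matrix.trace_eq_rank_of_isIdempotentElem {n K : Type*} [Fintype n] [DecidableEq n]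
    [Field K] {A : Matrix n n K} (hA : IsIdempotentElem A) : A.trace = A.rank := by
  have h : IsIdempotentElem (toLin' A) := hA.map toLinAlgEquiv'
  rw [← trace_toLin'_eq, (LinearMap.IsIdempotentElem.isProj_range _ h).trace, rank]
  rfl

theorem Finset.sum_smul_comp_eq_sum_image {ι α R M : Type*} [DecidableEq α] [Semiring R]
    [AddCommMonoid M] [Module R M] (s : Finset ι) (a : ι → R) (A : ι → α) (F : α → M) :
    ∑ j ∈ s, a j • F (A j) = ∑ X ∈ s.image A, (∑ j ∈ s with A j = X, a j) • F X :=
  (Finset.sum_image' _ fun j _ => by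
    rw [Finset.sum_smul]
    exact Finset.sum_congr rfl fun k hk => by rw [(Finset.mem_filter.mp hk).2]).symm

theorem eq_of_sum_mul_eq_sum_mul_of_le {ι : Type*} [Fintype ι] {c f g : ι → ℝ}
    (hc : ∀ i, 0 < c i) (hfg : ∀ i, f i ≤ g i) (h : ∑ i, c i * f i = ∑ i, c i * g i) (i : ι) :
    f i = g i := by
  have hle : ∀ i ∈ Finset.univ, c i * f i ≤ c i * g i := fun i _ =>
    mul_le_mul_of_nonneg_left (hfg i) (hc i).le
  exact mul_left_cancel₀ (hc i).ne' ((Finset.sum_eq_sum_iff_of_le hle).mp h i (Finset.mem_univ i))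

section UnitVectors
variable {n : Type*} [Fintype n] {x y : n → ℂ}

theorem star_dotProduct_self_sub_smul (hx : star x ⬝ᵥ x = 1) (hy : star y ⬝ᵥ y = 1) :
    star (y - (star x ⬝ᵥ y) • x) ⬝ᵥ (y - (star x ⬝ᵥ y) • x)
      = 1 - (Complex.normSq (star x ⬝ᵥ y) : ℂ) := by
  have hyx : star y ⬝ᵥ x = star (star x ⬝ᵥ y) := star_dotProduct y x
  simp only [star_sub, star_smul, sub_dotProduct, dotProduct_sub, smul_dotProduct,
    dotProduct_smul, hx, hy, hyx, smul_eq_mul]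
  rw [Complex.normSq_eq_conj_mul_self]
  simp

theorem normSq_star_dotProduct_le_one (hx : star x ⬝ᵥ x = 1) (hy : star y ⬝ᵥ y = 1) :
    Complex.normSq (star x ⬝ᵥ y) ≤ 1 := by
  have h := dotProduct_star_self_nonneg (y - (star x ⬝ᵥ y) • x)
  rw [star_dotProduct_self_sub_smul hx hy, sub_nonneg] at h
  exact_mod_cast h

theorem vecMulVec_eq_of_normSq_star_dotProduct_eq_one (hx : star x ⬝ᵥ x = 1)
    (hy : star y ⬝ᵥ y = 1) (h : Complex.normSq (star x ⬝ᵥ y) = 1) :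
    vecMulVec y (star y) = vecMulVec x (star x) := by
  have hyx : y = (star x ⬝ᵥ y) • x := by
    rw [← sub_eq_zero, ← dotProduct_star_self_eq_zero, star_dotProduct_self_sub_smul hx hy, h]
    simp
  rw [hyx, star_smul, smul_vecMulVec, vecMulVec_smul, smul_smul, Complex.star_def,
    Complex.mul_conj, h, Complex.ofReal_one, one_smul]

end UnitVectors

section WeightedRankOneSums
variable {n ι : Type*} [Fintype n] [Fintype ι] (w : ι → n → ℂ)

theorem sum_smul_vecMulVec_mulVec (a : ι → ℂ) (x : n → ℂ) :
    (∑ j, a j • vecMulVec (w j) (star (w j))) *ᵥ x = ∑ j, (a j * (star (w j) ⬝ᵥ x)) • w j := by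
  simp only [sum_mulVec, smul_mulVec, vecMulVec_mulVec, op_smul_eq_smul, smul_smul]

theorem star_dotProduct_sum_smul_vecMulVec_mulVec (c : ι → ℝ) (x : n → ℂ) :
    star x ⬝ᵥ ((∑ j, (c j : ℂ) • vecMulVec (w j) (star (w j))) *ᵥ x)
      = ((∑ j, c j * Complex.normSq (star (w j) ⬝ᵥ x) : ℝ) : ℂ) := by
  rw [sum_smul_vecMulVec_mulVec, dotProduct_sum]
  push_cast
  refine Finset.sum_congr rfl fun j _ => ?_
  rw [dotProduct_smul, smul_eq_mul, star_dotProduct x, Complex.normSq_eq_conj_mul_self,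
    Complex.star_def]
  ring

theorem trace_sum_smul_vecMulVec (c : ι → ℝ) (hw : ∀ j, star (w j) ⬝ᵥ w j = 1) :
    (∑ j, (c j : ℂ) • vecMulVec (w j) (star (w j))).trace = ((∑ j, c j : ℝ) : ℂ) := by
  simp [trace_sum, dotProduct_comm (w _), hw]

theorem trace_mul_self_sum_smul_vecMulVec (c : ι → ℝ) {M : Matrix n n ℂ}
    (hM : M = ∑ j, (c j : ℂ) • vecMulVec (w j) (star (w j))) :
    (M * M).trace = ((∑ j, ∑ k, c j * c k * Complex.normSq (star (w j) ⬝ᵥ w k) : ℝ) : ℂ) := by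
  have hcol : ∀ k, (M * vecMulVec (w k) (star (w k))).trace
      = ((∑ j, c j * Complex.normSq (star (w j) ⬝ᵥ w k) : ℝ) : ℂ) := fun k => by
    rw [mul_vecMulVec, trace_vecMulVec, dotProduct_comm, hM,
      star_dotProduct_sum_smul_vecMulVec_mulVec]
  have hMM : M * M = ∑ k, (c k : ℂ) • (M * vecMulVec (w k) (star (w k))) := by
    nth_rewrite 2 [hM]
    simp only [Finset.mul_sum, mul_smul_comm]
  rw [Finset.sum_comm, hMM]
  simp only [trace_sum, trace_smul, hcol, smul_eq_mul]
  push_cast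
  simp only [Finset.mul_sum]
  exact Finset.sum_congr rfl fun k _ => Finset.sum_congr rfl fun j _ => by ring

end WeightedRankOneSums

theorem mulVec_eq_self_of_posSemidef_sub_vecMulVec {n : Type*} [Fintype n] [DecidableEq n]
    {P : Matrix n n ℂ} {x : n → ℂ} (hP : P.IsHermitian) (hPP : P * P = P)
    (hx : star x ⬝ᵥ x = 1) (h : (P - vecMulVec x (star x)).PosSemidef) : P *ᵥ x = x := by
  set y := (1 - P) *ᵥ x
  have hQ : (1 - P)ᴴ * (1 - P) = 1 - P := by
    rw [conjTranspose_sub, conjTranspose_one, hP.eq, sub_mul, mul_sub, mul_sub, hPP]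
    simp
  have hy : star y ⬝ᵥ y = 1 - star x ⬝ᵥ (P *ᵥ x) := by
    rw [star_mulVec, ← dotProduct_mulVec, mulVec_mulVec, hQ, sub_mulVec, one_mulVec,
      dotProduct_sub, hx]
  have hle : 0 ≤ star x ⬝ᵥ (P *ᵥ x) - 1 := by
    simpa [sub_mulVec, vecMulVec_mulVec, hx] using h.dotProduct_mulVec_nonneg x
  have hy0 : star y ⬝ᵥ y = 0 :=
    le_antisymm (by rw [hy]; linear_combination hle) (dotProduct_star_self_nonneg y)
  have hy' : (1 - P) *ᵥ x = 0 := dotProduct_star_self_eq_zero.mp hy0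
  rwa [sub_mulVec, one_mulVec, sub_eq_zero, eq_comm] at hy'

section TensorVectors
variable {m n : Type*}

theorem kroneckerMap_vecMulVec {R : Type*} [CommSemiring R] (a b : m → R) (a' b' : n → R) :
    kroneckerMap (· * ·) (vecMulVec a b) (vecMulVec a' b')
      = vecMulVec (fun p : m × n => a p.1 * a' p.2) (fun p => b p.1 * b' p.2) := by
  ext ⟨i, i'⟩ ⟨k, k'⟩
  simp only [kroneckerMap_apply, vecMulVec_apply]
  ring

theorem dotProduct_tensor [Fintype m] [Fintype n] {R : Type*} [CommSemiring R] (x x' : m → R)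
    (y y' : n → R) :
    (fun p : m × n => x p.1 * y p.2) ⬝ᵥ (fun p => x' p.1 * y' p.2) = (x ⬝ᵥ x') * (y ⬝ᵥ y') := by
  simp only [dotProduct, Fintype.sum_prod_type, Finset.sum_mul_sum]
  exact Finset.sum_congr rfl fun a _ => Finset.sum_congr rfl fun b _ => by ring

theorem star_tensor (x : m → ℂ) (y : n → ℂ) :
    star (fun p : m × n => x p.1 * y p.2) = fun p => star x p.1 * star y p.2 := by
  funext p
  simp

theorem kroneckerMap_vecMulVec_star (ψ : n → ℂ) :
    kroneckerMap (· * ·) (vecMulVec ψ (star ψ)) (vecMulVec (star ψ) ψ)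
      = vecMulVec (fun p : n × n => ψ p.1 * star ψ p.2) (star fun p => ψ p.1 * star ψ p.2) := by
  rw [kroneckerMap_vecMulVec, star_tensor, star_star]

theorem star_dotProduct_tensor_star [Fintype n] (x y : n → ℂ) :
    star (fun p : n × n => x p.1 * star x p.2) ⬝ᵥ (fun p => y p.1 * star y p.2)
      = (Complex.normSq (star x ⬝ᵥ y) : ℂ) := by
  rw [star_tensor, dotProduct_tensor, star_star, dotProduct_comm x, star_dotProduct y x,
    Complex.star_def, Complex.mul_conj]

end TensorVectors

section ResolutionOfIdentity
variable {n ι : Type*} [Fintype n] [DecidableEq n] [Fintype ι] {c : ι → ℝ} {ψ : ι → n → ℂ}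

theorem star_dotProduct_eq_zero_or_vecMulVec_eq {P : Matrix (n × n) (n × n) ℂ}
    (hc : ∀ j, 0 < c j) (hψ : ∀ j, star (ψ j) ⬝ᵥ ψ j = 1)
    (hsum : ∑ j, (c j : ℂ) • vecMulVec (ψ j) (star (ψ j)) = 1)
    (hP : P = ∑ j, (c j : ℂ) •
        kroneckerMap (· * ·) (vecMulVec (ψ j) (star (ψ j))) (vecMulVec (star (ψ j)) (ψ j)))
    (hPP : P * P = P) (j k : ι) :
    star (ψ j) ⬝ᵥ ψ k = 0 ∨ vecMulVec (ψ j) (star (ψ j)) = vecMulVec (ψ k) (star (ψ k)) := by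
  set u : ι → n × n → ℂ := fun j p => ψ j p.1 * star (ψ j) p.2
  set g : ι → ι → ℝ := fun j k => Complex.normSq (star (ψ j) ⬝ᵥ ψ k)
  have hPu : P = ∑ j, (c j : ℂ) • vecMulVec (u j) (star (u j)) := by
    simp only [hP, kroneckerMap_vecMulVec_star, u]
  have hu : ∀ j k, star (u j) ⬝ᵥ u k = g j k := fun j k => star_dotProduct_tensor_star _ _
  have hg_le : ∀ j k, g j k ≤ 1 := fun j k => normSq_star_dotProduct_le_one (hψ j) (hψ k)
  have hrow : ∀ k, ∑ j, c j * g j k = 1 := fun k => by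
    have h := star_dotProduct_sum_smul_vecMulVec_mulVec ψ c (ψ k)
    rw [hsum, one_mulVec, hψ k] at h
    exact_mod_cast h.symm
  have htr : ∑ j, c j = ∑ j, ∑ k, c j * c k * g j k ^ 2 := by
    have hu1 : ∀ j, star (u j) ⬝ᵥ u j = 1 := fun j => by rw [hu]; simp [g, hψ]
    have h := congrArg trace hPP
    rw [trace_mul_self_sum_smul_vecMulVec u c hPu, hPu, trace_sum_smul_vecMulVec u c hu1] at h
    simp only [hu, Complex.normSq_ofReal, ← sq] at h
    exact_mod_cast h.symm
  have hsq : ∑ p : ι × ι, c p.1 * c p.2 * g p.1 p.2 ^ 2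
      = ∑ p : ι × ι, c p.1 * c p.2 * g p.1 p.2 := by
    rw [Fintype.sum_prod_type, Fintype.sum_prod_type, ← htr, Finset.sum_comm]
    refine Finset.sum_congr rfl fun k _ => ?_
    simp only [mul_comm (c _) (c k), mul_assoc, ← Finset.mul_sum, hrow, mul_one]
  have hgjk := eq_of_sum_mul_eq_sum_mul_of_le (fun p => mul_pos (hc p.1) (hc p.2))
    (fun p => by nlinarith [hg_le p.1 p.2, Complex.normSq_nonneg (star (ψ p.1) ⬝ᵥ ψ p.2)])
    hsq (j, k)
  have hgjk' : g j k * (g j k - 1) = 0 := by linear_combination hgjk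
  rcases mul_eq_zero.mp hgjk' with h0 | h1
  · exact Or.inl (Complex.normSq_eq_zero.mp h0)
  · exact Or.inr (vecMulVec_eq_of_normSq_star_dotProduct_eq_one (hψ j) (hψ k)
      (sub_eq_zero.mp h1)).symm

theorem coeff_eq_one_and_card_eq_of_sum_smul_eq_one {K : Type*} [Field K] [CharZero K]
    {S : Finset (Matrix n n K)} {a : Matrix n n K → K}
    (hidem : ∀ X ∈ S, X * X = X) (horth : ∀ X ∈ S, ∀ Y ∈ S, X ≠ Y → X * Y = 0)
    (htr : ∀ X ∈ S, X.trace = 1) (hone : ∑ X ∈ S, a X • X = 1) :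
    (∀ Y ∈ S, a Y = 1) ∧ S.card = Fintype.card n := by
  have ha : ∀ Y ∈ S, a Y = 1 := fun Y hY => by
    have h : a Y • Y = Y := calc
      a Y • Y = ∑ X ∈ S, a X • (X * Y) := by
        rw [Finset.sum_eq_single_of_mem Y hY fun X hX hXY => by rw [horth X hX Y hY hXY, smul_zero],
          hidem Y hY]
      _ = Y := by simp only [← smul_mul_assoc, ← Finset.sum_mul, hone, one_mul]
    simpa [htr Y hY] using congrArg trace h
  refine ⟨ha, ?_⟩
  have h := congrArg trace hone
  rw [trace_sum, trace_one, Finset.sum_congr rfl fun X hX => by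
    rw [trace_smul, ha X hX, htr X hX, one_smul], Finset.sum_const, nsmul_one] at h
  exact_mod_cast h

theorem exists_orthonormal_sum_eq_of_sum_smul_vecMulVec_eq_one
    {E : Type*} [AddCommMonoid E] [Module ℂ E] (F : Matrix n n ℂ → E)
    (hψ : ∀ j, star (ψ j) ⬝ᵥ ψ j = 1)
    (hsum : ∑ j, (c j : ℂ) • vecMulVec (ψ j) (star (ψ j)) = 1)
    (hdich : ∀ j k, star (ψ j) ⬝ᵥ ψ k = 0 ∨
      vecMulVec (ψ j) (star (ψ j)) = vecMulVec (ψ k) (star (ψ k))) :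
    ∃ B : n → n → ℂ, (∀ i i', star (B i) ⬝ᵥ B i' = if i = i' then 1 else 0) ∧
      ∑ j, (c j : ℂ) • F (vecMulVec (ψ j) (star (ψ j)))
        = ∑ i, F (vecMulVec (B i) (star (B i))) := by
  classical
  set A : ι → Matrix n n ℂ := fun j => vecMulVec (ψ j) (star (ψ j))
  set S := Finset.univ.image A
  set wt : Matrix n n ℂ → ℂ := fun X => ∑ j with A j = X, (c j : ℂ)
  have hS : ∀ X ∈ S, ∃ j, A j = X := fun X hX => by simpa using Finset.mem_image.mp hX
  have hidem : ∀ X ∈ S, X * X = X := fun X hX => by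
    obtain ⟨j, rfl⟩ := hS X hX
    simp [A, vecMulVec_mul_vecMulVec, hψ]
  have horth : ∀ X ∈ S, ∀ Y ∈ S, X ≠ Y → X * Y = 0 := fun X hX Y hY hXY => by
    obtain ⟨⟨j, rfl⟩, ⟨k, rfl⟩⟩ := And.intro (hS X hX) (hS Y hY)
    simp [A, vecMulVec_mul_vecMulVec, (hdich j k).resolve_right hXY]
  have htr : ∀ X ∈ S, X.trace = 1 := fun X hX => by
    obtain ⟨j, rfl⟩ := hS X hX
    rw [trace_vecMulVec, dotProduct_comm, hψ]
  have hone : ∑ X ∈ S, wt X • X = 1 :=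
    (Finset.sum_smul_comp_eq_sum_image _ (fun j => (c j : ℂ)) A id).symm.trans hsum
  obtain ⟨hwt, hcard⟩ := coeff_eq_one_and_card_eq_of_sum_smul_eq_one hidem horth htr hone
  replace hcard : Fintype.card n = Fintype.card S := by rw [Fintype.card_coe, hcard]
  let e : n ≃ S := Fintype.equivOfCardEq hcard
  choose idx hidx using fun X : S => hS X X.2
  refine ⟨fun i => ψ (idx (e i)), fun i i' => ?_, ?_⟩
  · split_ifs with h
    · rw [h, hψ]
    · refine (hdich _ _).resolve_right fun hA => h (e.injective (Subtype.ext ?_))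
      rw [← hidx, ← hidx]
      exact hA
  · have hsplit : ∑ j, (c j : ℂ) • F (A j) = ∑ X ∈ S, wt X • F X :=
      Finset.sum_smul_comp_eq_sum_image _ _ A F
    rw [hsplit, Finset.sum_congr rfl fun X hX => by rw [hwt X hX, one_smul],
      ← Finset.sum_coe_sort S F, ← e.sum_comp]
    exact Finset.sum_congr rfl fun i _ => congrArg F (hidx (e i)).symm

end ResolutionOfIdentity

section MaximallyEntangled
variable {d : ℕ}

theorem star_PhiVec : star (PhiVec d) = PhiVec d := by
  funext p
  simp only [PhiVec, Pi.star_apply]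
  split_ifs <;> simp [Complex.conj_ofReal]

theorem PhiVec_apply (p : Fin d × Fin d) :
    PhiVec d p = ((Real.sqrt d : ℝ) : ℂ)⁻¹ * (1 : Matrix (Fin d) (Fin d) ℂ) p.1 p.2 := by
  simp [PhiVec, one_apply]

theorem PhiVec_dotProduct (u : Fin d × Fin d → ℂ) :
    PhiVec d ⬝ᵥ u = ((Real.sqrt d : ℝ) : ℂ)⁻¹ * ∑ a, u (a, a) := by
  simp [dotProduct, PhiVec, Fintype.sum_prod_type, ite_mul, Finset.mul_sum]

theorem star_PhiVec_dotProduct_self (hd : 0 < d) : star (PhiVec d) ⬝ᵥ PhiVec d = 1 := by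
  have hsqrt : ((Real.sqrt d : ℝ) : ℂ) ^ 2 = d := by
    rw [← Complex.ofReal_pow, Real.sq_sqrt (Nat.cast_nonneg d)]; rfl
  have hd' : ((Real.sqrt d : ℝ) : ℂ) ≠ 0 := by
    rw [Complex.ofReal_ne_zero, Real.sqrt_ne_zero']; exact_mod_cast hd
  rw [star_PhiVec, PhiVec_dotProduct]
  simp only [PhiVec, if_true, Finset.sum_const, Finset.card_univ, Fintype.card_fin, nsmul_eq_mul]
  field_simp
  exact hsqrt.symm

variable {m : ℕ} {c : Fin m → ℝ} {P : Matrix (Fin d × Fin d) (Fin d × Fin d) ℂ}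

theorem vecMulVec_eq_vecMulVec_star_of_mulVec_PhiVec (hd : 0 < d) (hc : ∀ j, 0 < c j)
    {φ χ : Fin m → Fin d → ℂ}
    (hφ : ∀ j, star (φ j) ⬝ᵥ φ j = 1) (hχ : ∀ j, star (χ j) ⬝ᵥ χ j = 1)
    (hP : P = ∑ j, (c j : ℂ) •
        kroneckerMap (· * ·) (vecMulVec (φ j) (star (φ j))) (vecMulVec (χ j) (star (χ j))))
    (hPΦ : P *ᵥ PhiVec d = PhiVec d) (htr : P.trace = d) (j : Fin m) :
    vecMulVec (χ j) (star (χ j)) = vecMulVec (star (φ j)) (φ j) := by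
  set w : Fin m → Fin d × Fin d → ℂ := fun j p => φ j p.1 * χ j p.2
  have hPw : P = ∑ j, (c j : ℂ) • vecMulVec (w j) (star (w j)) := by
    simp only [hP, kroneckerMap_vecMulVec, w, star_tensor]
  have hw : ∀ j, star (w j) ⬝ᵥ w j = 1 := fun j => by
    rw [star_tensor, dotProduct_tensor, hφ, hχ, one_mul]
  have hcsum : ∑ j, c j = d := by
    rw [hPw, trace_sum_smul_vecMulVec w c hw] at htr
    exact_mod_cast htr
  have hφ' : ∀ j, star (star (φ j)) ⬝ᵥ star (φ j) = 1 := fun j => by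
    rw [star_star, dotProduct_comm, hφ]
  set s : Fin m → ℝ := fun j => Complex.normSq (star (star (φ j)) ⬝ᵥ χ j)
  have hws : ∀ j, Complex.normSq (star (w j) ⬝ᵥ PhiVec d) = s j / d := fun j => by
    rw [star_dotProduct, star_PhiVec, PhiVec_dotProduct, Complex.star_def, Complex.normSq_conj,
      Complex.normSq_mul, Complex.normSq_inv, Complex.normSq_ofReal,
      Real.mul_self_sqrt (Nat.cast_nonneg d), inv_mul_eq_div]
    simp [s, w, dotProduct]
  have hsum : ∑ j, c j * s j = ∑ j, c j * 1 := by
    have h := star_dotProduct_sum_smul_vecMulVec_mulVec w c (PhiVec d)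
    rw [← hPw, hPΦ, star_PhiVec_dotProduct_self hd] at h
    simp only [hws, mul_div_assoc', ← Finset.sum_div] at h
    have hd' : (d : ℝ) ≠ 0 := by exact_mod_cast hd.ne'
    rw [eq_comm, Complex.ofReal_eq_one, div_eq_one_iff_eq hd'] at h
    simp only [mul_one, h, hcsum]
  have hs := eq_of_sum_mul_eq_sum_mul_of_le hc
    (fun j => normSq_star_dotProduct_le_one (hφ' j) (hχ j)) hsum j
  simpa using vecMulVec_eq_of_normSq_star_dotProduct_eq_one (hφ' j) (hχ j) hs

theorem sum_smul_vecMulVec_eq_one_of_mulVec_PhiVec (hd : 0 < d) {ψ : Fin m → Fin d → ℂ}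
    (hψ : ∀ j, star (ψ j) ⬝ᵥ ψ j = 1)
    (hP : P = ∑ j, (c j : ℂ) •
        kroneckerMap (· * ·) (vecMulVec (ψ j) (star (ψ j))) (vecMulVec (star (ψ j)) (ψ j)))
    (hPΦ : P *ᵥ PhiVec d = PhiVec d) :
    ∑ j, (c j : ℂ) • vecMulVec (ψ j) (star (ψ j)) = 1 := by
  have hu : ∀ j, star (fun p : Fin d × Fin d => ψ j p.1 * star (ψ j) p.2) ⬝ᵥ PhiVec d
      = ((Real.sqrt d : ℝ) : ℂ)⁻¹ := fun j => by
    rw [star_dotProduct, star_PhiVec, PhiVec_dotProduct]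
    change star (_ * (ψ j ⬝ᵥ star (ψ j))) = _
    rw [dotProduct_comm, hψ, mul_one, star_inv₀, Complex.star_def, Complex.conj_ofReal]
  simp only [hP, kroneckerMap_vecMulVec_star, sum_smul_vecMulVec_mulVec, hu] at hPΦ
  have hd' : ((Real.sqrt d : ℝ) : ℂ)⁻¹ ≠ 0 := by
    refine inv_ne_zero ?_
    rw [Complex.ofReal_ne_zero, Real.sqrt_ne_zero']; exact_mod_cast hd
  ext a b
  refine mul_left_cancel₀ hd' ?_
  have h := congrFun hPΦ (a, b)
  simp only [Finset.sum_apply, Pi.smul_apply, smul_eq_mul, PhiVec_apply] at h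
  rw [← h, Matrix.sum_apply, Finset.mul_sum]
  refine Finset.sum_congr rfl fun j _ => ?_
  simp only [Matrix.smul_apply, vecMulVec_apply, smul_eq_mul]
  ring

end MaximallyEntangled

/-- a rank-d separable orthogonal projector P ≥ |Φ⟩⟨Φ| is of the form
P = Σ_{ψ∈B} |ψ⟩⟨ψ|⊗|ψ*⟩⟨ψ*| for some orthonormal basis B of ℂ^d. -/
theorem stmt10 {d : ℕ} (hd : 0 < d)
    (P : Matrix (Fin d × Fin d) (Fin d × Fin d) ℂ)
    (hPherm : P.IsHermitian) (hPproj : P * P = P) (hPrank : P.rank = d)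
    (m : ℕ) (c : Fin m → ℝ) (hc : ∀ j, 0 < c j)
    (φ χ : Fin m → Fin d → ℂ)
    (hφ : ∀ j, star (φ j) ⬝ᵥ φ j = 1) (hχ : ∀ j, star (χ j) ⬝ᵥ χ j = 1)
    (hP : P = ∑ j, (c j : ℂ) •
        Matrix.kroneckerMap (· * ·) (Matrix.vecMulVec (φ j) (star (φ j)))
          (Matrix.vecMulVec (χ j) (star (χ j))))
    (hge : (P - PhiMat d).PosSemidef) :
    ∃ B : Fin d → Fin d → ℂ, IsONB d B ∧ P = projCB d B := by
  have hPΦ : P *ᵥ PhiVec d = PhiVec d :=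
    mulVec_eq_self_of_posSemidef_sub_vecMulVec hPherm hPproj (star_PhiVec_dotProduct_self hd) hge
  have htr : P.trace = d := by rw [trace_eq_rank_of_isIdempotentElem hPproj, hPrank]
  have hχφ := vecMulVec_eq_vecMulVec_star_of_mulVec_PhiVec hd hc hφ hχ hP hPΦ htr
  simp only [hχφ] at hP
  have hsum := sum_smul_vecMulVec_eq_one_of_mulVec_PhiVec hd hφ hP hPΦ
  have hdich := star_dotProduct_eq_zero_or_vecMulVec_eq hc hφ hsum hP hPproj
  obtain ⟨B, hB, hBsum⟩ := exists_orthonormal_sum_eq_of_sum_smul_vecMulVec_eq_one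
    (fun X => kroneckerMap (· * ·) X Xᵀ) hφ hsum hdich
  refine ⟨B, hB, ?_⟩
  simpa only [hP, projCB, transpose_vecMulVec, star_star] using hBsum
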